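/- The Rényi divergence of order λ > 1 between two Gaussian distributions N(μ₁, σ²) and N(μ₂, σ²) with equal variance equals λ(μ₁ − μ₂)²/(2σ²). -/

import Mathlib

/-! Completing the square, `p₁ ^ λ * p₂ ^ (1 - λ)` for the densities `pᵢ` of `N(μᵢ, σ²)` is the
constant `exp (λ (λ - 1) (μ₁ - μ₂)² / (2σ²))` times the density of `N(λ μ₁ + (1 - λ) μ₂, σ²)`.
The latter integrates to `1`, so the logarithm of the integral is that exponent. -/

/-- Density of the Gaussian distribution `N(μ, σ²)` on `ℝ`. -/
noncomputable def gaussDensity (μ σ : ℝ) (x : ℝ) : ℝ :=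
  (1 / (σ * Real.sqrt (2 * Real.pi))) * Real.exp (-(x - μ) ^ 2 / (2 * σ ^ 2))

/-- Rényi divergence of order `l` between two densities `p, q` on `ℝ`:
`D_l(p‖q) = (1/(l-1)) * log ∫ p(x)^l * q(x)^(1-l) dx`. -/
noncomputable def renyiDivDensity (l : ℝ) (p q : ℝ → ℝ) : ℝ :=
  (l - 1)⁻¹ * Real.log (∫ x : ℝ, p x ^ l * q x ^ (1 - l))

open Real ProbabilityTheory MeasureTheory

lemma gaussDensity_eq_gaussianPDFReal (μ : ℝ) {σ : ℝ} (hσ : 0 ≤ σ) :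
    gaussDensity μ σ = gaussianPDFReal μ (σ ^ 2).toNNReal := by
  ext x
  rw [gaussDensity, gaussianPDFReal_def, Real.coe_toNNReal _ (sq_nonneg σ), one_div, mul_comm σ,
    sqrt_mul' _ (sq_nonneg σ), sqrt_sq hσ]

lemma integral_gaussDensity (μ : ℝ) {σ : ℝ} (hσ : 0 < σ) :
    ∫ x, gaussDensity μ σ x = 1 := by
  rw [gaussDensity_eq_gaussianPDFReal μ hσ.le]
  exact integral_gaussianPDFReal_eq_one μ (Real.toNNReal_pos.2 (by positivity)).ne'

lemma gaussDensity_rpow_mul_rpow (μ₁ μ₂ : ℝ) {σ : ℝ} (hσ : 0 ≤ σ) (t x : ℝ) :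
    gaussDensity μ₁ σ x ^ t * gaussDensity μ₂ σ x ^ (1 - t) =
      exp (t * (t - 1) * (μ₁ - μ₂) ^ 2 / (2 * σ ^ 2)) *
        gaussDensity (t * μ₁ + (1 - t) * μ₂) σ x := by
  simp only [gaussDensity]
  set A := 1 / (σ * √(2 * π))
  have hA : 0 ≤ A := by positivity
  have hA_rpow : A ^ t * A ^ (1 - t) = A := by
    rw [← rpow_add' hA (by simp), add_sub_cancel, rpow_one]
  rw [mul_rpow hA (exp_pos _).le, mul_rpow hA (exp_pos _).le, ← exp_mul, ← exp_mul]
  calc A ^ t * exp (-(x - μ₁) ^ 2 / (2 * σ ^ 2) * t) *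
        (A ^ (1 - t) * exp (-(x - μ₂) ^ 2 / (2 * σ ^ 2) * (1 - t)))
      = (A ^ t * A ^ (1 - t)) *
          exp (-(x - μ₁) ^ 2 / (2 * σ ^ 2) * t + -(x - μ₂) ^ 2 / (2 * σ ^ 2) * (1 - t)) := by
        rw [exp_add]; ring
    _ = _ := by
        rw [hA_rpow, mul_left_comm, ← exp_add]
        congr 2
        -- polynomial in `(2 * σ ^ 2)⁻¹`, hence valid even at `σ = 0`
        simp only [div_eq_mul_inv]
        ring

/-- **Rényi divergence between Gaussians with equal variance.** For `l > 1`
and `σ > 0`, `D_l(N(μ₁, σ²) ‖ N(μ₂, σ²)) = l * (μ₁ - μ₂)² / (2σ²)`. -/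
theorem renyiDiv_gaussian (l μ₁ μ₂ σ : ℝ) (hl : 1 < l) (hσ : 0 < σ) :
    renyiDivDensity l (gaussDensity μ₁ σ) (gaussDensity μ₂ σ) =
      l * (μ₁ - μ₂) ^ 2 / (2 * σ ^ 2) := by
  have hl' : l - 1 ≠ 0 := sub_ne_zero.2 hl.ne'
  simp only [renyiDivDensity, gaussDensity_rpow_mul_rpow μ₁ μ₂ hσ.le l, integral_const_mul,
    integral_gaussDensity _ hσ, mul_one, log_exp]
  field_simp
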